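/- arXiv:2308.08328 — 2 statements merged into one kernel-verified Lean document; each statement's English description precedes it below -/
import Mathlib

section
/- For every dimension d ≥ 1 and all positive integers n and k with k ≥ (2^{(d+1)/d} − 1)·n, one has (n + k)^d ≥ 2·n^d + (2n − 1)^d. -/
theorem background_length_d_dim (d n k : ℕ) (hd : 1 ≤ d) (hn : 0 < n) (hk0 : 0 < k)
    (hk : ((2 : ℝ) ^ (((d : ℝ) + 1) / d) - 1) * n ≤ k) :
    2 * (n : ℝ) ^ d + ((2 * n - 1 : ℝ)) ^ d ≤ ((n : ℝ) + k) ^ d := by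
  have hn1 : (1 : ℝ) ≤ n := by exact_mod_cast hn
  have hd0 : (d : ℝ) ≠ 0 := by positivity
  have hrpos : (0 : ℝ) < (2 : ℝ) ^ (((d : ℝ) + 1) / d) := Real.rpow_pos_of_pos (by norm_num) _
  have h1 : (2:ℝ) ^ (((d : ℝ) + 1) / d) * n ≤ n + k := by nlinarith
  have h2 : ((2:ℝ) ^ (((d : ℝ) + 1) / d) * n) ^ d ≤ ((n : ℝ) + k) ^ d :=
    pow_le_pow_left₀ (by positivity) h1 d
  have h3 : ((2:ℝ) ^ (((d : ℝ) + 1) / d)) ^ d = 2 ^ (d + 1) := by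
    rw [← Real.rpow_natCast ((2:ℝ) ^ (((d : ℝ) + 1) / d)) d,
        ← Real.rpow_mul (by norm_num), div_mul_cancel₀ _ hd0]
    rw [show ((d : ℝ) + 1) = ((d + 1 : ℕ) : ℝ) by push_cast; ring, Real.rpow_natCast]
  have h4 : ((2:ℝ) ^ (((d : ℝ) + 1) / d) * n) ^ d = 2 ^ (d + 1) * (n : ℝ) ^ d := by
    rw [mul_pow, h3]
  -- (2n-1)^d ≤ (2n)^d = 2^d n^d
  have h5 : ((2 * n - 1 : ℝ)) ^ d ≤ (2 : ℝ) ^ d * (n : ℝ) ^ d := by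
    rw [← mul_pow]
    exact pow_le_pow_left₀ (by linarith) (by linarith) d
  have h6 : (2 : ℝ) + 2 ^ d ≤ 2 ^ (d + 1) := by
    have : (2 : ℝ) ≤ 2 ^ d := by
      calc (2:ℝ) = 2 ^ 1 := by norm_num
      _ ≤ 2 ^ d := pow_le_pow_right₀ (by norm_num) hd
    rw [pow_succ]
    linarith
  have hnp : (0 : ℝ) ≤ (n : ℝ) ^ d := by positivity
  nlinarith [h2, h4, h5, h6, hnp]
end

section
/- Let N = n + k and let h ∈ ℂ^N, with indices extended periodically (h_i = h_{N+i} for i ≤ 0). Then (1/k) Σ_{ℓ=n+1}^{n+k} Σ_{i=n+1}^{n+k} |h_{ℓ−i}|² ≥ ((k−n)/k) · ‖h‖₂², where ‖h‖₂² = Σ_{j} |h_j|². -/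
open Finset

theorem circular_shift_energy_lower_bound (n k : ℕ) [NeZero (n + k)] (hk : 0 < k)
    (h : ZMod (n + k) → ℂ) :
    ((k : ℝ) - n) / k * ∑ j, ‖h j‖ ^ 2 ≤
      (1 / (k : ℝ)) * ∑ ℓ : Fin k, ∑ i : Fin k,
        ‖h ((((n + 1 + ℓ.val : ℕ) : ZMod (n + k))) -
            (((n + 1 + i.val : ℕ) : ZMod (n + k))))‖ ^ 2 := by
  set f : ZMod (n+k) → ℝ := fun x => ‖h x‖ ^ 2 with hf
  have hf0 : ∀ x, 0 ≤ f x := fun x => by positivity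
  set T : ℝ := ∑ j, f j with hT
  have hT0 : 0 ≤ T := Finset.sum_nonneg fun x _ => hf0 x
  set e : Fin k → ZMod (n+k) := fun i => ((n + 1 + i.val : ℕ) : ZMod (n+k)) with he
  have hcardZ : Fintype.card (ZMod (n+k)) = (n+k) := ZMod.card (n+k)
  have hkN : k ≤ (n+k) := by omega
  have hinj : Function.Injective e := by
    intro i j hij
    simp only [he, Nat.cast_add] at hij
    have h1 : ((i.val : ZMod (n+k))) = (j.val : ZMod (n+k)) := by
      exact add_left_cancel hij
    have hi : i.val < (n+k) := lt_of_lt_of_le i.isLt hkN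
    have hj : j.val < (n+k) := lt_of_lt_of_le j.isLt hkN
    have := congrArg ZMod.val h1
    rw [ZMod.val_natCast_of_lt hi, ZMod.val_natCast_of_lt hj] at this
    exact Fin.ext this
  -- full circular sum
  have hfull : ∀ c : ZMod (n+k), ∑ x : ZMod (n+k), f (c - x) = T := by
    intro c
    rw [hT]
    exact Equiv.sum_comp (Equiv.subLeft c) f
  -- sums over a shifted injective family are ≤ T
  have hbound : ∀ g : Fin k → ZMod (n+k), Function.Injective g →
      ∑ i : Fin k, f (g i) ≤ T := by
    intro g hg
    rw [← Finset.sum_image (f := f) (g := g)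
      (fun x _ y _ hxy => hg hxy)]
    exact Finset.sum_le_sum_of_subset_of_nonneg (Finset.subset_univ _)
      (fun x _ _ => hf0 x)
  set A : Finset (ZMod (n+k)) := Finset.image e Finset.univ with hA
  have hcardA : A.card = k := by
    rw [hA, Finset.card_image_of_injective _ hinj, Finset.card_univ,
      Fintype.card_fin]
  have hcardAc : Aᶜ.card = n := by
    rw [Finset.card_compl, hcardZ, hcardA]
    omega
  -- inner sum identity
  have hinner : ∀ c : ZMod (n+k), ∑ i : Fin k, f (c - e i)
      = T - ∑ x ∈ Aᶜ, f (c - x) := by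
    intro c
    have h1 : ∑ i : Fin k, f (c - e i) = ∑ x ∈ A, f (c - x) := by
      rw [hA, Finset.sum_image (fun x _ y _ hxy => hinj hxy)]
    have h2 : ∑ x ∈ Aᶜ, f (c - x) + ∑ x ∈ A, f (c - x) = T := by
      rw [Finset.sum_compl_add_sum, hfull c]
    rw [h1]; linarith
  set S : ℝ := ∑ ℓ : Fin k, ∑ i : Fin k, f (e ℓ - e i) with hS
  have hmain : ((k : ℝ) - n) * T ≤ S := by
    have h1 : S = k * T - ∑ x ∈ Aᶜ, ∑ ℓ : Fin k, f (e ℓ - x) := by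
      rw [hS]
      simp only [hinner]
      rw [Finset.sum_sub_distrib, Finset.sum_const, Finset.card_univ,
        Fintype.card_fin, nsmul_eq_mul, Finset.sum_comm]
    have h2 : ∑ x ∈ Aᶜ, ∑ ℓ : Fin k, f (e ℓ - x) ≤ n * T := by
      calc ∑ x ∈ Aᶜ, ∑ ℓ : Fin k, f (e ℓ - x)
          ≤ ∑ _x ∈ Aᶜ, T := Finset.sum_le_sum (fun x _ =>
            hbound (fun ℓ => e ℓ - x) (fun a b hab => hinj (by
              have := sub_left_injective hab; exact this)))
        _ = n * T := by rw [Finset.sum_const, hcardAc, nsmul_eq_mul]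
    linarith
  have hk0 : (0:ℝ) < k := Nat.cast_pos.mpr hk
  have hgoal : ((k : ℝ) - n) / k * T ≤ (1 / (k:ℝ)) * S := by
    rw [div_mul_eq_mul_div, one_div, inv_mul_eq_div, div_le_div_iff_of_pos_right hk0]
    exact hmain
  exact hgoal
end
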